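/- Let Ω be a finite type, let π and q be probability mass functions on Ω, and let r : Ω → ℝ be a binary reward taking values in {0,1}. Assume q(ω) > 0 whenever π(ω)·r(ω) > 0, and π(ω) > 0 whenever q(ω)·r(ω) > 0. Then ∑_{ω} π(ω) r(ω) ≥ ∑_{ω} q(ω) r(ω) log π(ω) + ∑_{ω} q(ω) r(ω) (1 − log q(ω)). (This is the paper's Lemma 1: expected reward under π is lower bounded by the reward-weighted log-likelihood under the proposal q plus a constant C = ∑_{ω} q(ω) r(ω)(1 − log q(ω)).) -/
import Mathlib


theorem stmt_0 {Ω : Type*} [Fintype Ω]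
    (π q : Ω → ℝ) (r : Ω → ℝ)
    (hπ0 : ∀ ω, 0 ≤ π ω) (hπ1 : ∑ ω, π ω = 1)
    (hq0 : ∀ ω, 0 ≤ q ω) (hq1 : ∑ ω, q ω = 1)
    (hr : ∀ ω, r ω = 0 ∨ r ω = 1)
    (hsupp1 : ∀ ω, 0 < π ω * r ω → 0 < q ω)
    (hsupp2 : ∀ ω, 0 < q ω * r ω → 0 < π ω) :
    ∑ ω, π ω * r ω ≥
      (∑ ω, q ω * r ω * Real.log (π ω)) +
      (∑ ω, q ω * r ω * (1 - Real.log (q ω))) := by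
  rw [← Finset.sum_add_distrib]
  apply Finset.sum_le_sum
  intro ω _
  rcases hr ω with h | h
  · simp [h]
  · rw [h]
    rcases eq_or_lt_of_le (hq0 ω) with hq | hq
    · simp [← hq, hπ0 ω]
    · have hπ : 0 < π ω := hsupp2 ω (by rw [h]; simpa using hq)
      have hlog : Real.log (π ω) - Real.log (q ω) ≤ π ω / q ω - 1 := by
        rw [← Real.log_div (ne_of_gt hπ) (ne_of_gt hq)]
        exact Real.log_le_sub_one_of_pos (div_pos hπ hq)
      have := mul_le_mul_of_nonneg_left hlog (le_of_lt hq)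
      have hc : q ω * (π ω / q ω - 1) = π ω - q ω := by
        field_simp
      rw [hc] at this
      nlinarith
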